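/- Every orientation-preserving self-homeomorphism of the closed interval I = [-1,1] fixing endpoints is a commutator: for any f ∈ Homeo⁺(I) there exist g, h ∈ Homeo⁺(I) such that f = g ∘ h ∘ g⁻¹ ∘ h⁻¹. -/

import Mathlib

open Set

abbrev II : Type := Set.Icc (-1:ℝ) 1

noncomputable def ptNeg : II := ⟨-1, by constructor <;> norm_num⟩
noncomputable def ptPos : II := ⟨1, by constructor <;> norm_num⟩

/-- `f` is an orientation-preserving self-homeomorphism of `[-1,1]` fixing endpoints. -/
def HomeoPlus (f : II ≃ₜ II) : Prop :=
  StrictMono (fun z : II => f z) ∧ f ptNeg = ptNeg ∧ f ptPos = ptPos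

/-- `z` lies in the open interval `(-1,1)`. -/
def InOpen (z : II) : Prop := -1 < (z:ℝ) ∧ (z:ℝ) < 1

noncomputable def z0 : II := ⟨0, by constructor <;> norm_num⟩

lemma inOpen_iff_lt {z : II} : InOpen z ↔ ptNeg < z ∧ z < ptPos := by
  unfold InOpen
  rw [show ptNeg < z ↔ ((ptNeg : II):ℝ) < z from Subtype.coe_lt_coe.symm,
    show z < ptPos ↔ ((z : II):ℝ) < ptPos from Subtype.coe_lt_coe.symm]
  rfl

lemma strictMono_inv {φ : II → II} (hm : StrictMono φ)
    {ψ : II → II} (hψ : ∀ z, φ (ψ z) = z) : StrictMono ψ := by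
  intro a b hab
  rcases lt_trichotomy (ψ a) (ψ b) with h | h | h
  · exact h
  · exact absurd (by rw [← hψ a, ← hψ b, h]) (ne_of_lt hab)
  · exact absurd (by rw [← hψ a, ← hψ b]; exact hm h) (not_lt.2 (le_of_lt hab))

def HPp (P : Equiv.Perm II) : Prop :=
  StrictMono ⇑P ∧ P ptNeg = ptNeg ∧ P ptPos = ptPos

lemma HPp_one : HPp 1 := ⟨fun _ _ h => h, rfl, rfl⟩

lemma HPp_mul {P Q : Equiv.Perm II} (hP : HPp P) (hQ : HPp Q) : HPp (P * Q) := by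
  refine ⟨?_, ?_, ?_⟩
  · intro a b h; exact hP.1 (hQ.1 h)
  · show P (Q ptNeg) = ptNeg; rw [hQ.2.1, hP.2.1]
  · show P (Q ptPos) = ptPos; rw [hQ.2.2, hP.2.2]

lemma HPp_inv {P : Equiv.Perm II} (hP : HPp P) : HPp P⁻¹ := by
  refine ⟨strictMono_inv hP.1 (fun z => P.apply_symm_apply z), ?_, ?_⟩
  · have := congrArg (⇑P⁻¹) hP.2.1
    rw [Equiv.Perm.inv_def, Equiv.symm_apply_apply] at this; exact this.symm
  · have := congrArg (⇑P⁻¹) hP.2.2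
    rw [Equiv.Perm.inv_def, Equiv.symm_apply_apply] at this; exact this.symm

lemma HPp_zpow {P : Equiv.Perm II} (hP : HPp P) (n : ℤ) : HPp (P ^ n) := by
  let S : Subgroup (Equiv.Perm II) :=
    { carrier := {Q | HPp Q}
      one_mem' := HPp_one
      mul_mem' := fun ha hb => HPp_mul ha hb
      inv_mem' := fun ha => HPp_inv ha }
  exact S.zpow_mem hP n

lemma HPp_inOpen {P : Equiv.Perm II} (hP : HPp P) {z : II} (hz : InOpen z) :
    InOpen (P z) := by
  rw [inOpen_iff_lt] at hz ⊢
  exact ⟨hP.2.1 ▸ hP.1 hz.1, hP.2.2 ▸ hP.1 hz.2⟩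

noncomputable def negII : II → II := fun z =>
  ⟨-(z:ℝ), by constructor <;> [linarith [z.2.2]; linarith [z.2.1]]⟩

/-- Surjectivity from continuity + endpoint fixing, via IVT. -/
lemma surj_of_cont {φ : II → II} (hc : Continuous φ)
    (h1 : φ ptNeg = ptNeg) (h2 : φ ptPos = ptPos) : Function.Surjective φ := by
  intro w
  set ψ : ℝ → ℝ := fun x => (φ (projIcc (-1) 1 (by norm_num) x) : ℝ) with hψ
  have hcψ : Continuous ψ := continuous_subtype_val.comp (hc.comp (continuous_projIcc))
  have e1 : ψ (-1) = -1 := by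
    simp only [hψ, projIcc_left]
    rw [show (⟨-1, left_mem_Icc.2 (by norm_num)⟩ : II) = ptNeg from rfl, h1]; rfl
  have e2 : ψ 1 = 1 := by
    simp only [hψ, projIcc_right]
    rw [show (⟨1, right_mem_Icc.2 (by norm_num)⟩ : II) = ptPos from rfl, h2]; rfl
  have : (w:ℝ) ∈ Icc (ψ (-1)) (ψ 1) := by rw [e1, e2]; exact w.2
  obtain ⟨x, hx, hxe⟩ := intermediate_value_Icc (by norm_num : (-1:ℝ) ≤ 1) hcψ.continuousOn this
  refine ⟨projIcc (-1) 1 (by norm_num) x, Subtype.ext hxe⟩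

/-- Core orbit lemma: iterates of a continuous strictly monotone map above the identity
converge to the right endpoint. -/
lemma orbit_sup {φ : II → II} (hc : Continuous φ) (hm : StrictMono φ)
    (htop : φ ptPos = ptPos) (hgt : ∀ z : II, InOpen z → (z:ℝ) < (φ z : ℝ)) :
    ∀ r : ℝ, r < 1 → ∃ k : ℕ, r < ((φ^[k] z0 : II) : ℝ) := by
  set u : ℕ → II := fun k => φ^[k] z0 with hu
  have hstep : ∀ k, u (k+1) = φ (u k) := by
    intro k; simp [hu, Function.iterate_succ_apply']
  have hopen : ∀ k, InOpen (u k) := by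
    intro k; induction k with
    | zero => constructor <;> norm_num [hu, z0]
    | succ k ih =>
      rw [hstep k]
      refine ⟨lt_trans ih.1 (hgt _ ih), ?_⟩
      have : φ (u k) < φ ptPos := hm (by
        rcases lt_or_eq_of_le (u k).2.2 with h | h
        · exact Subtype.coe_lt_coe.1 (by rw [show ((ptPos:II):ℝ) = 1 from rfl]; exact h)
        · exact absurd h (ne_of_lt ih.2))
      rw [htop] at this
      exact Subtype.coe_lt_coe.2 this
  have hmono : StrictMono fun k => ((u k : II) : ℝ) := by
    apply strictMono_nat_of_lt_succ
    intro k
    rw [hstep k]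
    exact hgt _ (hopen k)
  have hbdd : BddAbove (range fun k => ((u k : II) : ℝ)) :=
    ⟨1, by rintro x ⟨k, rfl⟩; exact (u k).2.2⟩
  set L : ℝ := ⨆ k, ((u k : II) : ℝ) with hL
  have htend : Filter.Tendsto (fun k => ((u k : II) : ℝ)) Filter.atTop (nhds L) :=
    tendsto_atTop_ciSup hmono.monotone hbdd
  have hL1 : L ≤ 1 := ciSup_le fun k => (u k).2.2
  have hL0 : (0:ℝ) ≤ L := le_trans (by norm_num [hu, z0]) (le_ciSup hbdd 0)
  have hLmem : L ∈ Icc (-1:ℝ) 1 := ⟨by linarith, hL1⟩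
  set uL : II := ⟨L, hLmem⟩ with huL
  have htend' : Filter.Tendsto u Filter.atTop (nhds uL) := by
    rw [tendsto_subtype_rng]; exact htend
  have hfix : φ uL = uL := by
    have h1 : Filter.Tendsto (fun k => φ (u k)) Filter.atTop (nhds (φ uL)) :=
      (hc.tendsto uL).comp htend'
    have h2 : Filter.Tendsto (fun k => φ (u k)) Filter.atTop (nhds uL) := by
      have h3 := htend'.comp (Filter.tendsto_add_atTop_nat 1)
      have : (u ∘ fun a => a + 1) = fun k => φ (u k) := by
        funext k; simp [Function.comp, hstep]
      rwa [this] at h3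
    exact tendsto_nhds_unique h1 h2
  have hLeq : L = 1 := by
    by_contra h
    have : InOpen uL := ⟨by simp [huL]; linarith, lt_of_le_of_ne hL1 h⟩
    have := hgt uL this
    rw [hfix] at this
    exact lt_irrefl _ this
  intro r hr
  rw [hLeq] at htend
  have := htend.eventually_const_lt hr
  obtain ⟨k, hk⟩ := this.exists
  exact ⟨k, hk⟩

lemma negII_negII (z : II) : negII (negII z) = z := Subtype.ext (neg_neg _)

lemma negII_cont : Continuous negII :=
  Continuous.subtype_mk (continuous_neg.comp continuous_subtype_val) _

lemma negII_anti : StrictAnti negII := fun a b h => Subtype.coe_lt_coe.1 (by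
  show -(b:ℝ) < -(a:ℝ); exact neg_lt_neg h)

lemma cofinal (P : II ≃ₜ II) (hm : StrictMono ⇑P) (hneg : P ptNeg = ptNeg)
    (hpos : P ptPos = ptPos) (hgt : ∀ z : II, InOpen z → (z:ℝ) < (P z : ℝ)) :
    ∀ z : II, InOpen z →
      (∃ n : ℤ, (((P.toEquiv ^ n) z0 : II) : ℝ) ≤ (z:ℝ)) ∧
      (∃ n : ℤ, (z:ℝ) < (((P.toEquiv ^ n) z0 : II) : ℝ)) := by
  have hcoe : ⇑P.toEquiv = ⇑P := rfl
  have hpow : ∀ (k : ℕ) (z : II), (P.toEquiv ^ (k:ℤ)) z = (⇑P)^[k] z := by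
    intro k
    induction k with
    | zero => intro z; simp
    | succ k ih =>
      intro z
      rw [Function.iterate_succ_apply', ← ih]
      have : (P.toEquiv ^ ((k+1:ℕ):ℤ)) = P.toEquiv * P.toEquiv ^ (k:ℤ) := by
        rw [← zpow_one_add]; congr 1; push_cast; ring
      rw [this, Equiv.Perm.mul_apply, hcoe]
  intro z hz
  constructor
  · -- downward, via the reflected map
    set ψ : II → II := fun w => negII (P.symm (negII w)) with hψdef
    have hsymm_mono : StrictMono ⇑P.symm :=
      strictMono_inv hm (fun w => P.apply_symm_apply w)
    have hsymm_neg : P.symm ptNeg = ptNeg := by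
      have := congrArg (⇑P.symm) hneg
      rw [P.symm_apply_apply] at this; exact this.symm
    have hsymm_pos : P.symm ptPos = ptPos := by
      have := congrArg (⇑P.symm) hpos
      rw [P.symm_apply_apply] at this; exact this.symm
    have hψc : Continuous ψ := negII_cont.comp (P.symm.continuous.comp negII_cont)
    have hψm : StrictMono ψ := fun a b h =>
      negII_anti (hsymm_mono (negII_anti h))
    have hψpos : ψ ptPos = ptPos := by
      have e1 : negII ptPos = ptNeg := Subtype.ext (by norm_num [negII, ptPos, ptNeg])
      have e2 : negII ptNeg = ptPos := Subtype.ext (by norm_num [negII, ptPos, ptNeg])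
      simp only [hψdef, e1, hsymm_neg, e2]
    have hnegOpen : ∀ w : II, InOpen w → InOpen (negII w) := by
      rintro w ⟨h1, h2⟩; exact ⟨by simpa [negII] using neg_lt_neg h2,
        by simpa [negII] using neg_lt_neg h1⟩
    have hsymmOpen : ∀ w : II, InOpen w → InOpen (P.symm w) := by
      intro w hw
      rw [inOpen_iff_lt] at hw ⊢
      constructor
      · rw [← hsymm_neg]; exact hsymm_mono hw.1
      · rw [← hsymm_pos]; exact hsymm_mono hw.2
    have hψgt : ∀ w : II, InOpen w → (w:ℝ) < (ψ w : ℝ) := by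
      intro w hw
      have h1 : InOpen (negII w) := hnegOpen w hw
      have h2 : InOpen (P.symm (negII w)) := hsymmOpen _ h1
      have := hgt _ h2
      rw [P.apply_symm_apply] at this
      show (w:ℝ) < -((P.symm (negII w) : II) : ℝ)
      have : ((P.symm (negII w) : II) : ℝ) < -(w:ℝ) := this
      linarith
    obtain ⟨k, hk⟩ := orbit_sup hψc hψm hψpos hψgt (-(z:ℝ)) (by linarith [hz.1])
    have hiter : ∀ k : ℕ, ψ^[k] z0 = negII ((P.toEquiv ^ (-(k:ℤ))) z0) := by
      intro k
      induction k with
      | zero => simp; exact (negII_negII z0 ▸ (by rw [negII_negII]; exact (Subtype.ext (by norm_num [negII, z0])))) 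
      | succ k ih =>
        rw [Function.iterate_succ_apply', ih]
        show negII (P.symm (negII (negII _))) = _
        rw [negII_negII]
        congr 1
        have e1 : P.toEquiv⁻¹ * P.toEquiv ^ (-(k:ℤ)) = P.toEquiv ^ (-((k+1:ℕ):ℤ)) := by
          rw [← zpow_neg_one, ← zpow_add]; congr 1; push_cast; ring
        have : P.symm ((P.toEquiv ^ (-(k:ℤ))) z0) =
            (P.toEquiv⁻¹ * P.toEquiv ^ (-(k:ℤ))) z0 := rfl
        rw [this, e1]
    rw [hiter k] at hk
    refine ⟨-(k:ℤ), le_of_lt ?_⟩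
    have : -(z:ℝ) < -(((P.toEquiv ^ (-(k:ℤ))) z0 : II) : ℝ) := hk
    linarith
  · obtain ⟨k, hk⟩ := orbit_sup P.continuous hm hpos hgt (z:ℝ) hz.2
    refine ⟨(k:ℤ), ?_⟩
    rw [hpow k z0]; exact hk

lemma inOpen_iff {z : II} : InOpen z ↔ z ≠ ptNeg ∧ z ≠ ptPos := by
  constructor
  · rintro ⟨h1, h2⟩
    constructor <;> intro h <;> subst h <;> simp [ptNeg, ptPos] at h1 h2
  · rintro ⟨h1, h2⟩
    have hz := z.2
    constructor
    · rcases lt_or_eq_of_le hz.1 with h | h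
      · exact h
      · exact absurd (Subtype.ext h.symm) h1
    · rcases lt_or_eq_of_le hz.2 with h | h
      · exact h
      · exact absurd (Subtype.ext h) h2

theorem homeoPlus_is_commutator (f : II ≃ₜ II) (hf : HomeoPlus f) :
    ∃ g h : II ≃ₜ II, HomeoPlus g ∧ HomeoPlus h ∧
      ∀ z : II, f z = g (h (g.symm (h.symm z))) := by
  classical
  obtain ⟨hfm', hfneg, hfpos⟩ := hf
  have hfm : StrictMono ⇑f := hfm'
  -- facts about f.symm
  have hsm : StrictMono ⇑f.symm := strictMono_inv hfm (fun w => f.apply_symm_apply w)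
  have hsneg : f.symm ptNeg = ptNeg := by
    have := congrArg (⇑f.symm) hfneg; rw [f.symm_apply_apply] at this; exact this.symm
  have hspos : f.symm ptPos = ptPos := by
    have := congrArg (⇑f.symm) hfpos; rw [f.symm_apply_apply] at this; exact this.symm
  have hsopen : ∀ z : II, InOpen z → InOpen (f.symm z) := by
    intro z hz
    rw [inOpen_iff_lt] at hz ⊢
    exact ⟨hsneg ▸ hsm hz.1, hspos ▸ hsm hz.2⟩
  -- the map b
  have hbmem : ∀ z : II, 1 - (1 - max (z:ℝ) ((f.symm z : II):ℝ))^2/2 ∈ Icc (-1:ℝ) 1 := by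
    intro z
    have h1 := z.2.1; have h2 := z.2.2
    have h3 := (f.symm z).2.1; have h4 := (f.symm z).2.2
    have hm1 : -1 ≤ max (z:ℝ) ((f.symm z : II):ℝ) := le_trans h1 (le_max_left _ _)
    have hm2 : max (z:ℝ) ((f.symm z : II):ℝ) ≤ 1 := max_le h2 h4
    constructor <;> nlinarith
  set b : II → II := fun z => ⟨1 - (1 - max (z:ℝ) ((f.symm z : II):ℝ))^2/2, hbmem z⟩
    with hbdef
  have hbm : StrictMono b := by
    intro x y hxy
    have hmx : max (x:ℝ) ((f.symm x : II):ℝ) < max (y:ℝ) ((f.symm y : II):ℝ) :=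
      max_lt_max (Subtype.coe_lt_coe.2 hxy) (Subtype.coe_lt_coe.2 (hsm hxy))
    have b1 : -1 ≤ max (x:ℝ) ((f.symm x : II):ℝ) := le_trans x.2.1 (le_max_left _ _)
    have b2 : max (y:ℝ) ((f.symm y : II):ℝ) ≤ 1 := max_le y.2.2 (f.symm y).2.2
    apply Subtype.coe_lt_coe.1
    show 1 - (1 - max (x:ℝ) ((f.symm x : II):ℝ))^2/2 <
      1 - (1 - max (y:ℝ) ((f.symm y : II):ℝ))^2/2
    nlinarith
  have hbc : Continuous b := by
    apply Continuous.subtype_mk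
    exact continuous_const.sub (((continuous_const.sub
      (continuous_subtype_val.max
        (continuous_subtype_val.comp f.symm.continuous))).pow 2).div_const 2)
  have hbneg : b ptNeg = ptNeg := by
    apply Subtype.ext
    show 1 - (1 - max ((ptNeg : II):ℝ) ((f.symm ptNeg : II):ℝ))^2/2 = ((ptNeg : II):ℝ)
    rw [hsneg]; norm_num [ptNeg]
  have hbpos : b ptPos = ptPos := by
    apply Subtype.ext
    show 1 - (1 - max ((ptPos : II):ℝ) ((f.symm ptPos : II):ℝ))^2/2 = ((ptPos : II):ℝ)
    rw [hspos]; norm_num [ptPos]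
  have hbgt : ∀ z : II, InOpen z → (z:ℝ) < ((b z : II):ℝ) ∧
      ((f.symm z : II):ℝ) < ((b z : II):ℝ) := by
    intro z hz
    have hz2 := hsopen z hz
    have hm1 : max (z:ℝ) ((f.symm z : II):ℝ) < 1 := max_lt hz.2 hz2.2
    have hm2 : -1 < max (z:ℝ) ((f.symm z : II):ℝ) :=
      lt_of_lt_of_le hz.1 (le_max_left _ _)
    have key : max (z:ℝ) ((f.symm z : II):ℝ) <
        1 - (1 - max (z:ℝ) ((f.symm z : II):ℝ))^2/2 := by nlinarith
    exact ⟨lt_of_le_of_lt (le_max_left _ _) key, lt_of_le_of_lt (le_max_right _ _) key⟩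
  -- the map a
  set a : II → II := fun z => f (b z) with hadef
  have ham : StrictMono a := fun x y h => hfm (hbm h)
  have hac : Continuous a := f.continuous.comp hbc
  have haneg : a ptNeg = ptNeg := by show f (b ptNeg) = ptNeg; rw [hbneg, hfneg]
  have hapos : a ptPos = ptPos := by show f (b ptPos) = ptPos; rw [hbpos, hfpos]
  have hagt : ∀ z : II, InOpen z → (z:ℝ) < ((a z : II):ℝ) := by
    intro z hz
    have h2 : f.symm z < b z := Subtype.coe_lt_coe.1 (hbgt z hz).2
    have h3 := hfm h2
    rw [f.apply_symm_apply] at h3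
    exact Subtype.coe_lt_coe.2 h3
  -- homeomorphisms and permutations
  have hbsurj : Function.Surjective b := surj_of_cont hbc hbneg hbpos
  have hasurj : Function.Surjective a := surj_of_cont hac haneg hapos
  set Bh : II ≃ₜ II := (StrictMono.orderIsoOfSurjective b hbm hbsurj).toHomeomorph
    with hBhdef
  set Ah : II ≃ₜ II := (StrictMono.orderIsoOfSurjective a ham hasurj).toHomeomorph
    with hAhdef
  have hBcoe : ⇑Bh = b := rfl
  have hAcoe : ⇑Ah = a := rfl
  set Bp : Equiv.Perm II := Bh.toEquiv with hBpdef
  set Ap : Equiv.Perm II := Ah.toEquiv with hApdef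
  have hBpcoe : ⇑Bp = b := rfl
  have hApcoe : ⇑Ap = a := rfl
  have hBP : HPp Bp := ⟨hbm, hbneg, hbpos⟩
  have hAP : HPp Ap := ⟨ham, haneg, hapos⟩
  -- orbits
  set c : ℤ → ℝ := fun n => (((Bp ^ n) z0 : II) : ℝ) with hcdef
  set d : ℤ → ℝ := fun n => (((Ap ^ n) z0 : II) : ℝ) with hddef
  have hz0open : InOpen z0 := ⟨by norm_num [z0], by norm_num [z0]⟩
  have hcopen : ∀ n : ℤ, InOpen ((Bp ^ n) z0) := fun n => HPp_inOpen (HPp_zpow hBP n) hz0open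
  have hdopen : ∀ n : ℤ, InOpen ((Ap ^ n) z0) := fun n => HPp_inOpen (HPp_zpow hAP n) hz0open
  have hstepB : ∀ (n : ℤ) (z : II), (Bp ^ (n+1)) z = b ((Bp ^ n) z) := by
    intro n z
    rw [show n+1 = 1+n by ring, zpow_add, zpow_one, Equiv.Perm.mul_apply]
    rfl
  have hstepA : ∀ (n : ℤ) (z : II), (Ap ^ (n+1)) z = a ((Ap ^ n) z) := by
    intro n z
    rw [show n+1 = 1+n by ring, zpow_add, zpow_one, Equiv.Perm.mul_apply]
    rfl
  have hcmono : StrictMono c := by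
    apply strictMono_int_of_lt_succ
    intro n
    show (((Bp ^ n) z0 : II) : ℝ) < (((Bp ^ (n+1)) z0 : II) : ℝ)
    rw [hstepB n z0]
    exact (hbgt _ (hcopen n)).1
  have hdmono : StrictMono d := by
    apply strictMono_int_of_lt_succ
    intro n
    show (((Ap ^ n) z0 : II) : ℝ) < (((Ap ^ (n+1)) z0 : II) : ℝ)
    rw [hstepA n z0]
    exact hagt _ (hdopen n)
  have hcofB := cofinal Bh hbm hbneg hbpos (fun z hz => (hbgt z hz).1)
  have hcofA := cofinal Ah ham haneg hapos hagt
  -- the greatest-index functions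
  have hNex : ∀ z : II, ∃ n : ℤ, InOpen z → (c n ≤ (z:ℝ) ∧ (z:ℝ) < c (n+1)) := by
    intro z
    by_cases hz : InOpen z
    · obtain ⟨⟨nlo, hlo⟩, ⟨nhi, hhi⟩⟩ := hcofB z hz
      obtain ⟨n, hn1, hn2⟩ := Int.exists_greatest_of_bdd (P := fun n => c n ≤ (z:ℝ))
        ⟨nhi, fun m hm => by
          by_contra hcon
          push_neg at hcon
          have h5 : c nhi ≤ c m := hcmono.monotone (le_of_lt hcon)
          have h6 : (z:ℝ) < c m := lt_of_lt_of_le hhi h5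
          linarith⟩ ⟨nlo, hlo⟩
      refine ⟨n, fun _ => ⟨hn1, ?_⟩⟩
      by_contra h
      push_neg at h
      have := hn2 (n+1) h
      omega
    · exact ⟨0, fun h => absurd h hz⟩
  choose N hN using hNex
  have hNuniq : ∀ z : II, InOpen z → ∀ m : ℤ, c m ≤ (z:ℝ) → (z:ℝ) < c (m+1) → N z = m := by
    intro z hz m h1 h2
    obtain ⟨k1, k2⟩ := hN z hz
    by_contra h
    rcases lt_or_gt_of_ne h with hlt | hgt
    · have : c (N z + 1) ≤ c m := hcmono.monotone (by omega)
      linarith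
    · have : c (m+1) ≤ c (N z) := hcmono.monotone (by omega)
      linarith
  have hNdex : ∀ z : II, ∃ n : ℤ, InOpen z → (d n ≤ (z:ℝ) ∧ (z:ℝ) < d (n+1)) := by
    intro z
    by_cases hz : InOpen z
    · obtain ⟨⟨nlo, hlo⟩, ⟨nhi, hhi⟩⟩ := hcofA z hz
      obtain ⟨n, hn1, hn2⟩ := Int.exists_greatest_of_bdd (P := fun n => d n ≤ (z:ℝ))
        ⟨nhi, fun m hm => by
          by_contra hcon
          push_neg at hcon
          have h5 : d nhi ≤ d m := hdmono.monotone (le_of_lt hcon)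
          have h6 : (z:ℝ) < d m := lt_of_lt_of_le hhi h5
          linarith⟩ ⟨nlo, hlo⟩
      refine ⟨n, fun _ => ⟨hn1, ?_⟩⟩
      by_contra h
      push_neg at h
      have := hn2 (n+1) h
      omega
    · exact ⟨0, fun h => absurd h hz⟩
  choose Nd hNd using hNdex
  -- basic values
  have hc0 : c 0 = 0 := by show (((Bp ^ (0:ℤ)) z0 : II) : ℝ) = 0; rw [zpow_zero]; rfl
  have hc1 : c 1 = ((b z0 : II):ℝ) := by
    show (((Bp ^ (0+1:ℤ)) z0 : II) : ℝ) = _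
    rw [hstepB 0 z0, zpow_zero]
    rfl
  have hd1 : d 1 = ((a z0 : II):ℝ) := by
    show (((Ap ^ (0+1:ℤ)) z0 : II) : ℝ) = _
    rw [hstepA 0 z0, zpow_zero]
    rfl
  have hc1pos : 0 < c 1 := by
    rw [hc1]
    have := (hbgt z0 hz0open).1
    simpa [z0] using this
  have hd1pos : 0 < d 1 := by
    rw [hd1]
    have := hagt z0 hz0open
    simpa [z0] using this
  have hc1lt : c 1 < 1 := (hcopen 1).2
  have hd1lt : d 1 < 1 := (hdopen 1).2
  set r : ℝ := d 1 / c 1 with hrdef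
  have hrpos : 0 < r := div_pos hd1pos hc1pos
  -- cancellation helper
  have hcancel : ∀ (P : Equiv.Perm II) (n m : ℤ) (z : II),
      (P ^ n) ((P ^ m) z) = (P ^ (n+m)) z := by
    intro P n m z; rw [← Equiv.Perm.mul_apply, ← zpow_add]
  -- bounds on the normalized point
  have hwb : ∀ (z : II) (n : ℤ), c n ≤ (z:ℝ) → (z:ℝ) < c (n+1) →
      0 ≤ (((Bp ^ (-n)) z : II):ℝ) ∧ (((Bp ^ (-n)) z : II):ℝ) < c 1 := by
    intro z n h1 h2
    have mono := (HPp_zpow hBP (-n)).1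
    have m1 : (Bp ^ n) z0 ≤ z := Subtype.coe_le_coe.1 h1
    have m2 : z < (Bp ^ (n+1)) z0 := Subtype.coe_lt_coe.1 h2
    have e0 : (Bp ^ (-n)) ((Bp ^ n) z0) = z0 := by
      rw [hcancel, show -n+n = (0:ℤ) by ring, zpow_zero]; rfl
    have e1 : (Bp ^ (-n)) ((Bp ^ (n+1)) z0) = Bp z0 := by
      rw [hcancel, show -n+(n+1) = (1:ℤ) by ring, zpow_one]
    constructor
    · have h3 := mono.monotone m1
      rw [e0] at h3
      have h4 := Subtype.coe_le_coe.2 h3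
      simpa [z0] using h4
    · have h3 := mono m2
      rw [e1] at h3
      have h4 := Subtype.coe_lt_coe.2 h3
      rw [hc1]
      exact h4
  have hwa : ∀ (z : II) (n : ℤ), d n ≤ (z:ℝ) → (z:ℝ) < d (n+1) →
      0 ≤ (((Ap ^ (-n)) z : II):ℝ) ∧ (((Ap ^ (-n)) z : II):ℝ) < d 1 := by
    intro z n h1 h2
    have mono := (HPp_zpow hAP (-n)).1
    have m1 : (Ap ^ n) z0 ≤ z := Subtype.coe_le_coe.1 h1
    have m2 : z < (Ap ^ (n+1)) z0 := Subtype.coe_lt_coe.1 h2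
    have e0 : (Ap ^ (-n)) ((Ap ^ n) z0) = z0 := by
      rw [hcancel, show -n+n = (0:ℤ) by ring, zpow_zero]; rfl
    have e1 : (Ap ^ (-n)) ((Ap ^ (n+1)) z0) = Ap z0 := by
      rw [hcancel, show -n+(n+1) = (1:ℤ) by ring, zpow_one]
    constructor
    · have h3 := mono.monotone m1
      rw [e0] at h3
      have h4 := Subtype.coe_le_coe.2 h3
      simpa [z0] using h4
    · have h3 := mono m2
      rw [e1] at h3
      have h4 := Subtype.coe_lt_coe.2 h3
      rw [hd1]
      exact h4
  have hc1r : c 1 * r = d 1 := by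
    rw [hrdef]; field_simp
  -- the conjugating map g
  set g : II → II := fun z => if hz : InOpen z then
      (Ap ^ (N z)) (projIcc (-1) 1 (by norm_num) ((((Bp ^ (-(N z))) z : II):ℝ) * r))
    else z with hgdef
  have hgmem : ∀ (z : II), InOpen z →
      (((Bp ^ (-(N z))) z : II):ℝ) * r ∈ Icc (-1:ℝ) 1 := by
    intro z hz
    obtain ⟨h1, h2⟩ := hN z hz
    obtain ⟨w1, w2⟩ := hwb z (N z) h1 h2
    have p1 : 0 ≤ (((Bp ^ (-(N z))) z : II):ℝ) * r := mul_nonneg w1 hrpos.le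
    have p2 : (((Bp ^ (-(N z))) z : II):ℝ) * r < d 1 := by
      calc (((Bp ^ (-(N z))) z : II):ℝ) * r < c 1 * r :=
            mul_lt_mul_of_pos_right w2 hrpos
        _ = d 1 := hc1r
    exact ⟨by linarith, by linarith⟩
  have hgeq : ∀ (z : II) (hz : InOpen z),
      g z = (Ap ^ (N z)) ⟨(((Bp ^ (-(N z))) z : II):ℝ) * r, hgmem z hz⟩ := by
    intro z hz
    simp only [hgdef]
    rw [dif_pos hz, projIcc_of_mem]
  have hgfml : ∀ (z : II) (hz : InOpen z) (m : ℤ), c m ≤ (z:ℝ) → (z:ℝ) < c (m+1) →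
      ∀ (p : (((Bp ^ (-m)) z : II):ℝ) * r ∈ Icc (-1:ℝ) 1),
      g z = (Ap ^ m) ⟨(((Bp ^ (-m)) z : II):ℝ) * r, p⟩ := by
    intro z hz m h1 h2 p
    have heq := hNuniq z hz m h1 h2
    subst heq
    exact hgeq z hz
  -- bounds for g
  have hgbounds : ∀ (z : II) (hz : InOpen z),
      d (N z) ≤ ((g z : II):ℝ) ∧ ((g z : II):ℝ) < d (N z + 1) := by
    intro z hz
    obtain ⟨h1, h2⟩ := hN z hz
    obtain ⟨w1, w2⟩ := hwb z (N z) h1 h2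
    rw [hgeq z hz]
    have monoA := (HPp_zpow hAP (N z)).1
    have hy0 : z0 ≤ (⟨(((Bp ^ (-(N z))) z : II):ℝ) * r, hgmem z hz⟩ : II) := by
      apply Subtype.coe_le_coe.1
      show (0:ℝ) ≤ _
      exact mul_nonneg w1 hrpos.le
    have hy1 : (⟨(((Bp ^ (-(N z))) z : II):ℝ) * r, hgmem z hz⟩ : II) < Ap z0 := by
      apply Subtype.coe_lt_coe.1
      show _ < ((Ap z0 : II):ℝ)
      have : (((Bp ^ (-(N z))) z : II):ℝ) * r < d 1 := by
        calc (((Bp ^ (-(N z))) z : II):ℝ) * r < c 1 * r :=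
              mul_lt_mul_of_pos_right w2 hrpos
          _ = d 1 := hc1r
      rw [hd1] at this
      exact this
    constructor
    · have h3 := monoA.monotone hy0
      exact Subtype.coe_le_coe.2 h3
    · have h3 := monoA hy1
      have e : (Ap ^ (N z)) (Ap z0) = (Ap ^ (N z + 1)) z0 := by
        have e2 : Ap z0 = (Ap ^ (1:ℤ)) z0 := by rw [zpow_one]
        rw [e2, hcancel]
      rw [e] at h3
      exact Subtype.coe_lt_coe.2 h3
  have hgopen : ∀ z : II, InOpen z → InOpen (g z) := fun z hz =>
    ⟨lt_of_lt_of_le (hdopen (N z)).1 (hgbounds z hz).1,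
     lt_trans (hgbounds z hz).2 (hdopen (N z + 1)).2⟩
  have hnotNeg : ¬ InOpen ptNeg := by
    intro h; have := h.1; norm_num [ptNeg] at this
  have hnotPos : ¬ InOpen ptPos := by
    intro h; have := h.2; norm_num [ptPos] at this
  have hgid : ∀ z : II, ¬ InOpen z → g z = z := by
    intro z hz; simp only [hgdef]; rw [dif_neg hz]
  have hgneg : g ptNeg = ptNeg := hgid _ hnotNeg
  have hgpos : g ptPos = ptPos := hgid _ hnotPos
  have hnotopen : ∀ z : II, ¬InOpen z → z = ptNeg ∨ z = ptPos := by
    intro z hz; by_contra h; push_neg at h; exact hz (inOpen_iff.2 h)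
  -- monotonicity of N
  have hNmono : ∀ z1 z2 : II, InOpen z1 → InOpen z2 → z1 ≤ z2 → N z1 ≤ N z2 := by
    intro z1 z2 h1 h2 hle
    by_contra h
    push_neg at h
    have hcc : c (N z2 + 1) ≤ c (N z1) := hcmono.monotone (by omega)
    have g1 := (hN z1 h1).1
    have g2 := (hN z2 h2).2
    have hle' : (z1:ℝ) ≤ (z2:ℝ) := Subtype.coe_le_coe.2 hle
    linarith
  -- strict monotonicity of g
  have hptlt : ptNeg < ptPos := Subtype.coe_lt_coe.1 (by norm_num [ptNeg, ptPos])
  have hgm : StrictMono g := by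
    intro z1 z2 h12
    by_cases h1 : InOpen z1
    · by_cases h2 : InOpen z2
      · have hn12 : N z1 ≤ N z2 := hNmono _ _ h1 h2 h12.le
        rcases eq_or_lt_of_le hn12 with heq | hlt
        · -- same fundamental domain
          obtain ⟨a1, a2⟩ := hN z1 h1
          obtain ⟨b1, b2⟩ := hN z2 h2
          have b1' : c (N z1) ≤ (z2:ℝ) := by rw [heq]; exact b1
          have b2' : (z2:ℝ) < c (N z1 + 1) := by rw [heq]; exact b2
          have p1 := hgmem z1 h1
          have p2 : (((Bp ^ (-(N z1))) z2 : II):ℝ) * r ∈ Icc (-1:ℝ) 1 := by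
            rw [heq]; exact hgmem z2 h2
          rw [hgfml z1 h1 (N z1) a1 a2 p1, hgfml z2 h2 (N z1) b1' b2' p2]
          apply (HPp_zpow hAP (N z1)).1
          apply Subtype.mk_lt_mk.2
          have : (Bp ^ (-(N z1))) z1 < (Bp ^ (-(N z1))) z2 := (HPp_zpow hBP _).1 h12
          have hv : (((Bp ^ (-(N z1))) z1 : II):ℝ) < (((Bp ^ (-(N z1))) z2 : II):ℝ) :=
            Subtype.coe_lt_coe.2 this
          exact mul_lt_mul_of_pos_right hv hrpos
        · -- different fundamental domains
          have b1 := (hgbounds z1 h1).2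
          have b2 := (hgbounds z2 h2).1
          have hdd : d (N z1 + 1) ≤ d (N z2) := hdmono.monotone (by omega)
          exact Subtype.coe_lt_coe.1 (by linarith)
      · -- z2 is an endpoint; it must be ptPos
        rcases hnotopen z2 h2 with rfl | rfl
        · have : ptNeg ≤ z1 := Subtype.coe_le_coe.1 (by exact z1.2.1)
          exact absurd h12 (not_lt.2 this)
        · rw [hgpos]
          rw [inOpen_iff_lt] at *
          exact (hgopen z1 h1).2
    · -- z1 is an endpoint; it must be ptNeg
      rcases hnotopen z1 h1 with rfl | rfl
      · rw [hgneg]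
        by_cases h2 : InOpen z2
        · rw [inOpen_iff_lt] at *
          exact (hgopen z2 h2).1
        · rcases hnotopen z2 h2 with rfl | rfl
          · exact absurd h12 (lt_irrefl ptNeg)
          · rw [hgpos]; exact hptlt
      · have : z2 ≤ ptPos := Subtype.coe_le_coe.1 (by exact z2.2.2)
        exact absurd h12 (not_lt.2 this)
  -- surjectivity of g
  have hgsurj : Function.Surjective g := by
    intro w
    by_cases hw : InOpen w
    · obtain ⟨h1, h2⟩ := hNd w hw
      obtain ⟨y1, y2⟩ := hwa w (Nd w) h1 h2
      set n := Nd w with hndef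
      set x : ℝ := (((Ap ^ (-n)) w : II):ℝ) * (c 1 / d 1) with hxdef
      have hx0 : 0 ≤ x := mul_nonneg y1 (div_pos hc1pos hd1pos).le
      have hx1 : x < c 1 := by
        calc x < d 1 * (c 1 / d 1) :=
              mul_lt_mul_of_pos_right y2 (div_pos hc1pos hd1pos)
          _ = c 1 := by field_simp
      have hxmem : x ∈ Icc (-1:ℝ) 1 := ⟨by linarith, by linarith⟩
      set zx : II := ⟨x, hxmem⟩ with hzxdef
      set z : II := (Bp ^ n) zx with hzdef
      have hz0x : z0 ≤ zx := Subtype.coe_le_coe.1 (by simpa [z0] using hx0)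
      have hc1' : c 1 = ((Bp z0 : II):ℝ) := by
        show (((Bp ^ (1:ℤ)) z0 : II):ℝ) = _
        rw [zpow_one]
      have hzxlt : zx < Bp z0 := Subtype.coe_lt_coe.1 (hc1' ▸ hx1)
      have s1 : c n ≤ (z:ℝ) :=
        Subtype.coe_le_coe.2 ((HPp_zpow hBP n).1.monotone hz0x)
      have s2 : (z:ℝ) < c (n+1) := by
        have h3 := (HPp_zpow hBP n).1 hzxlt
        have e : (Bp ^ n) (Bp z0) = (Bp ^ (n+1)) z0 := by
          have e2 : Bp z0 = (Bp ^ (1:ℤ)) z0 := by rw [zpow_one]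
          rw [e2, hcancel]
        rw [e] at h3
        exact Subtype.coe_lt_coe.2 h3
      have hzopen : InOpen z := ⟨lt_of_lt_of_le (hcopen n).1 s1,
        lt_trans s2 (hcopen (n+1)).2⟩
      have hback : (Bp ^ (-n)) z = zx := by
        rw [hzdef, hcancel, show -n+n = (0:ℤ) by ring, zpow_zero]; rfl
      have hp : (((Bp ^ (-n)) z : II):ℝ) * r ∈ Icc (-1:ℝ) 1 := by
        rw [hback]
        constructor
        · have := mul_nonneg hx0 hrpos.le; linarith
        · have : x * r < c 1 * r := mul_lt_mul_of_pos_right hx1 hrpos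
          rw [hc1r] at this; linarith
      refine ⟨z, ?_⟩
      rw [hgfml z hzopen n s1 s2 hp]
      have hval : (((Bp ^ (-n)) z : II):ℝ) * r = (((Ap ^ (-n)) w : II):ℝ) := by
        have hcoex : (((Bp ^ (-n)) z : II):ℝ) = x := by rw [hback]
        rw [hcoex, hxdef, hrdef]
        field_simp
      have heq2 : (⟨(((Bp ^ (-n)) z : II):ℝ) * r, hp⟩ : II) = (Ap ^ (-n)) w :=
        Subtype.ext hval
      rw [heq2, hcancel, show n + -n = (0:ℤ) by ring, zpow_zero]
      rfl
    · exact ⟨w, hgid w hw⟩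
  -- equivariance: g ∘ Bp = Ap ∘ g
  have hequi : ∀ z : II, g (Bp z) = Ap (g z) := by
    intro z
    by_cases hz : InOpen z
    · obtain ⟨h1, h2⟩ := hN z hz
      have hBz : InOpen (Bp z) := HPp_inOpen hBP hz
      have estep : ∀ (m : ℤ) (u : II), (Bp ^ m) (Bp u) = (Bp ^ (m+1)) u := by
        intro m u
        have e2 : Bp u = (Bp ^ (1:ℤ)) u := by rw [zpow_one]
        rw [e2, hcancel]
      have estepOut : ∀ (m : ℤ) (u : II), Bp ((Bp ^ m) u) = (Bp ^ (m+1)) u := by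
        intro m u
        have e2 : Bp ((Bp ^ m) u) = (Bp ^ (1:ℤ)) ((Bp ^ m) u) := by rw [zpow_one]
        rw [e2, hcancel, show (1:ℤ)+m = m+1 by ring]
      have s1 : c (N z + 1) ≤ ((Bp z : II):ℝ) := by
        have m1 : (Bp ^ (N z)) z0 ≤ z := Subtype.coe_le_coe.1 h1
        have h3 := hBP.1.monotone m1
        rw [show Bp ((Bp ^ (N z)) z0) = (Bp ^ (N z + 1)) z0 from estepOut (N z) z0] at h3
        exact Subtype.coe_le_coe.2 h3
      have s2 : ((Bp z : II):ℝ) < c (N z + 1 + 1) := by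
        have m2 : z < (Bp ^ (N z + 1)) z0 := Subtype.coe_lt_coe.1 h2
        have h3 := hBP.1 m2
        rw [show Bp ((Bp ^ (N z + 1)) z0) = (Bp ^ (N z + 1 + 1)) z0 from estepOut _ z0] at h3
        exact Subtype.coe_lt_coe.2 h3
      have hq : (Bp ^ (-(N z + 1))) (Bp z) = (Bp ^ (-(N z))) z := by
        rw [show (Bp ^ (-(N z + 1))) (Bp z) = (Bp ^ (-(N z + 1) + 1)) z from estep _ z,
          show -(N z + 1) + 1 = -(N z) by ring]
      have hp1 := hgmem z hz
      have hp2 : (((Bp ^ (-(N z + 1))) (Bp z) : II):ℝ) * r ∈ Icc (-1:ℝ) 1 := by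
        rw [hq]; exact hp1
      rw [hgfml (Bp z) hBz (N z + 1) s1 s2 hp2, hgfml z hz (N z) h1 h2 hp1]
      have heqY : (⟨(((Bp ^ (-(N z + 1))) (Bp z) : II):ℝ) * r, hp2⟩ : II) =
          ⟨(((Bp ^ (-(N z))) z : II):ℝ) * r, hp1⟩ := Subtype.ext (by
        show (((Bp ^ (-(N z + 1))) (Bp z) : II):ℝ) * r = (((Bp ^ (-(N z))) z : II):ℝ) * r
        rw [hq])
      rw [heqY]
      rw [show (N z : ℤ) + 1 = 1 + N z by ring, zpow_add, zpow_one, Equiv.Perm.mul_apply]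
    · rcases hnotopen z hz with rfl | rfl
      · rw [hBP.2.1, hgid _ hz, hAP.2.1]
      · rw [hBP.2.2, hgid _ hz, hAP.2.2]
  -- assemble the homeomorphism G
  set Gh : II ≃ₜ II := (StrictMono.orderIsoOfSurjective g hgm hgsurj).toHomeomorph
    with hGhdef
  have hGcoe : ⇑Gh = g := rfl
  refine ⟨Gh, Bh, ⟨hgm, ?_, ?_⟩, ⟨hbm, hbneg, hbpos⟩, ?_⟩
  · show g ptNeg = ptNeg; exact hgneg
  · show g ptPos = ptPos; exact hgpos
  intro z
  have h1 : Gh (Gh.symm (Bh.symm z)) = Bh.symm z := Gh.apply_symm_apply _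
  have h2 := hequi (Gh.symm (Bh.symm z))
  show f z = Gh (Bh (Gh.symm (Bh.symm z)))
  have e1 : Gh (Bh (Gh.symm (Bh.symm z))) = g (Bp (Gh.symm (Bh.symm z))) := rfl
  rw [e1, h2]
  have e2 : Ap (g (Gh.symm (Bh.symm z))) = a (Gh (Gh.symm (Bh.symm z))) := rfl
  rw [e2, h1]
  show f z = f (b (Bh.symm z))
  congr 1
  exact (Bh.apply_symm_apply z).symm
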